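/- Let (V, J, R) be an algebraic Kähler model of real dimension 2m with m ≥ 2, and let 2 ≤ r ≤ m. Suppose every r-dimensional totally real subspace W of V is special for R. Then ⟨R(X,Y)X,JY⟩ = 0 for all vectors X, Y ∈ V such that X, JX, Y, JY are orthonormal; consequently R satisfies the XY-condition ⟨R(X,JX)Y,JX⟩ = ⟨R(Y,JY)X,JY⟩ for all such X, Y. -/

import Mathlib

open RealInnerProductSpace Module

/-- An algebraic curvature tensor on a real inner product space `V`. -/
structure CurvatureTensor (V : Type*) [NormedAddCommGroup V] [InnerProductSpace ℝ V] where
  R : V → V → V → V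
  lin₁ : ∀ Y Z, IsLinearMap ℝ fun X => R X Y Z
  lin₂ : ∀ X Z, IsLinearMap ℝ fun Y => R X Y Z
  lin₃ : ∀ X Y, IsLinearMap ℝ fun Z => R X Y Z
  antisymm₁ : ∀ X Y Z W, ⟪R X Y Z, W⟫ = -⟪R Y X Z, W⟫
  antisymm₂ : ∀ X Y Z W, ⟪R X Y Z, W⟫ = -⟪R X Y W, Z⟫
  pair_symm : ∀ X Y Z W, ⟪R X Y Z, W⟫ = ⟪R Z W X, Y⟫
  bianchi : ∀ X Y Z, R X Y Z + R Y Z X + R Z X Y = 0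

/-- A subspace `W` is special for `T` if for every orthonormal basis `v_1, …, v_r` of `W`
and every `w ∈ W`, one has `∑ i, R (v i) w (v i) ∈ W`. -/
def CurvatureTensor.IsSpecial {V : Type*} [NormedAddCommGroup V] [InnerProductSpace ℝ V]
    (T : CurvatureTensor V) (W : Submodule ℝ V) : Prop :=
  ∀ (b : OrthonormalBasis (Fin (finrank ℝ W)) ℝ W) (w : V), w ∈ W →
    (∑ i, T.R (b i : V) w (b i)) ∈ W

/-- An algebraic Kähler model: an algebraic curvature tensor together with a compatible
orthogonal complex structure `J`. -/
structure KahlerModel (V : Type*) [NormedAddCommGroup V] [InnerProductSpace ℝ V]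
    extends CurvatureTensor V where
  J : V →ₗ[ℝ] V
  J_isometry : ∀ X Y, ⟪J X, J Y⟫ = ⟪X, Y⟫
  J_sq : ∀ X, J (J X) = -X
  R_J_invariant : ∀ X Y Z, R (J X) (J Y) Z = R X Y Z
  R_J_commute : ∀ X Y Z, R X Y (J Z) = J (R X Y Z)

/-- The XY-condition: `⟪R(X,JX)Y, JX⟫ = ⟪R(Y,JY)X, JY⟫` whenever `X, JX, Y, JY`
are orthonormal. -/
def KahlerModel.XYCond {V : Type*} [NormedAddCommGroup V] [InnerProductSpace ℝ V]
    (T : KahlerModel V) : Prop :=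
  ∀ X Y : V, Orthonormal ℝ ![X, T.J X, Y, T.J Y] →
    ⟪T.R X (T.J X) Y, T.J X⟫ = ⟪T.R Y (T.J Y) X, T.J Y⟫

/-- A subspace `W` is totally real (antiholomorphic) if `J W` is orthogonal to `W`. -/
def KahlerModel.IsTotallyReal {V : Type*} [NormedAddCommGroup V] [InnerProductSpace ℝ V]
    (T : KahlerModel V) (W : Submodule ℝ V) : Prop :=
  ∀ v ∈ W, ∀ u ∈ W, ⟪T.J v, u⟫ = 0

/-!
Let `X, JX, Y, JY` be orthonormal. The orthogonal complement of `X, JX, Y, JY` is `J`-invariant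
of dimension `2m - 4`, so it contains orthonormal `u₁, …, u_{r-2}` spanning a totally real
subspace; then `Z, Y, u₁, …, u_{r-2}` spans an `r`-dimensional totally real subspace `W` for both
`Z = X` and `Z = JX`. As `JY ⊥ W`, specialness of `W` gives
`⟪R(Z,Y)Z, JY⟫ + ∑ ⟪R(uᵢ,Y)uᵢ, JY⟫ = 0`, and since `⟪R(JX,Y)JX, JY⟫ = -⟪R(X,Y)X, JY⟫`, the
first term vanishes. This identity is homogeneous, so it holds whenever `Y ⊥ X, JX`; applying it
to `X + Y, X - Y` with `‖X‖ = ‖Y‖` yields `⟪R(X,Y)X, JX⟫ = ⟪R(X,Y)Y, JY⟫`, which for the pair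
`X, JY` is the XY-condition.
-/

open Submodule Set

theorem Submodule.finrank_le_finrank_inf_orthogonal_add {V : Type*} [NormedAddCommGroup V]
    [InnerProductSpace ℝ V] [FiniteDimensional ℝ V] (U K : Submodule ℝ V) :
    finrank ℝ U ≤ finrank ℝ ↥(U ⊓ Kᗮ) + finrank ℝ K := by
  have := finrank_sup_add_finrank_inf_eq U Kᗮ
  have := K.finrank_add_finrank_orthogonal
  have := (U ⊔ Kᗮ).finrank_le
  omega

namespace CurvatureTensor

variable {V : Type*} [NormedAddCommGroup V] [InnerProductSpace ℝ V] (T : CurvatureTensor V)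

theorem R_smul_left (c : ℝ) (x y z : V) : T.R (c • x) y z = c • T.R x y z :=
  (T.lin₁ y z).map_smul c x

theorem R_neg_left (x y z : V) : T.R (-x) y z = -T.R x y z :=
  (T.lin₁ y z).mk' _ |>.map_neg x

theorem R_add_left (x x' y z : V) : T.R (x + x') y z = T.R x y z + T.R x' y z :=
  (T.lin₁ y z).map_add x x'

theorem R_smul_mid (c : ℝ) (x y z : V) : T.R x (c • y) z = c • T.R x y z :=
  (T.lin₂ x z).map_smul c y

theorem R_sub_mid (x y y' z : V) : T.R x (y - y') z = T.R x y z - T.R x y' z :=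
  (T.lin₂ x z).mk' _ |>.map_sub y y'

theorem R_smul_right (c : ℝ) (x y z : V) : T.R x y (c • z) = c • T.R x y z :=
  (T.lin₃ x y).map_smul c z

theorem R_add_right (x y z z' : V) : T.R x y (z + z') = T.R x y z + T.R x y z' :=
  (T.lin₃ x y).map_add z z'

theorem R_swap (x y z : V) : T.R y x z = -T.R x y z :=
  ext_inner_right ℝ fun w ↦ by rw [inner_neg_left, T.antisymm₁]

theorem R_self (x z : V) : T.R x x z = 0 := by
  have := T.R_swap x x z
  rwa [eq_neg_iff_add_eq_zero, ← two_smul ℝ, smul_eq_zero, or_iff_right two_ne_zero] at this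

theorem sum_inner_R_eq_zero_of_isSpecial {ι : Type*} [Fintype ι] {v : ι → V}
    (hv : Orthonormal ℝ v) (hW : T.IsSpecial (span ℝ (range v))) {w η : V}
    (hw : w ∈ span ℝ (range v)) (hη : η ∈ (span ℝ (range v))ᗮ) :
    ∑ i, ⟪T.R (v i) w (v i), η⟫ = 0 := by
  have hb : ⇑(Basis.span hv.linearIndependent) = fun i ↦ ⟨v i, subset_span (mem_range_self i)⟩ :=
    funext (Basis.span_apply _)
  let b := (Basis.span hv.linearIndependent).toOrthonormalBasis (hb ▸ orthonormal_span hv)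
  let e := Fintype.equivFinOfCardEq (finrank_span_eq_card hv.linearIndependent).symm
  have h := inner_right_of_mem_orthogonal (hW (b.reindex e) w hw) hη
  rw [sum_inner, ← e.sum_comp] at h
  simpa [b, hb] using h

end CurvatureTensor

namespace KahlerModel

variable {V : Type*} [NormedAddCommGroup V] [InnerProductSpace ℝ V] (T : KahlerModel V)

theorem inner_J_left (x y : V) : ⟪T.J x, y⟫ = -⟪x, T.J y⟫ := by
  rw [← T.J_isometry (T.J x), T.J_sq, inner_neg_left]

theorem inner_J_self (x : V) : ⟪T.J x, x⟫ = 0 := by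
  have h := T.inner_J_left x x
  rw [real_inner_comm] at h ⊢
  linarith

theorem norm_J (x : V) : ‖T.J x‖ = ‖x‖ :=
  (T.J.isometryOfInner T.J_isometry).norm_map x

theorem R_J_left (x y z : V) : T.R (T.J x) y z = -T.R x (T.J y) z := by
  rw [← T.R_J_invariant (T.J x), T.J_sq, T.R_neg_left]

theorem inner_R_J_J (x y : V) : ⟪T.R (T.J x) y (T.J x), T.J y⟫ = -⟪T.R x y x, T.J y⟫ := by
  rw [T.R_J_left, inner_neg_left, T.R_J_commute, T.J_isometry, T.pair_symm]

def complexLine (e : V) : Submodule ℝ V := ℝ ∙ e ⊔ ℝ ∙ T.J e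

theorem self_mem_complexLine (e : V) : e ∈ T.complexLine e :=
  mem_sup_left (mem_span_singleton_self e)

theorem J_mem_complexLine {e x : V} (hx : x ∈ T.complexLine e) : T.J x ∈ T.complexLine e := by
  obtain ⟨y, hy, z, hz, rfl⟩ := mem_sup.1 hx
  obtain ⟨a, rfl⟩ := mem_span_singleton.1 hy
  obtain ⟨b, rfl⟩ := mem_span_singleton.1 hz
  rw [map_add, map_smul, map_smul, T.J_sq, smul_neg, add_comm, neg_add_eq_sub]
  exact sub_mem (mem_sup_right (smul_mem _ _ (mem_span_singleton_self _)))
    (mem_sup_left (smul_mem _ _ (mem_span_singleton_self _)))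

theorem J_mem_orthogonal {K : Submodule ℝ V} (hK : ∀ x ∈ K, T.J x ∈ K) {x : V} (hx : x ∈ Kᗮ) :
    T.J x ∈ Kᗮ := fun k hk ↦ by
  rw [real_inner_comm, inner_J_left, real_inner_comm, inner_right_of_mem_orthogonal (hK k hk) hx,
    neg_zero]

theorem mem_orthogonal_complexLine_iff {e x : V} :
    x ∈ (T.complexLine e)ᗮ ↔ ⟪e, x⟫ = 0 ∧ ⟪T.J e, x⟫ = 0 := by
  rw [complexLine, ← inf_orthogonal, mem_inf, mem_orthogonal_singleton_iff_inner_right,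
    mem_orthogonal_singleton_iff_inner_right]

theorem finrank_complexLine_le (e : V) : finrank ℝ (T.complexLine e) ≤ 2 := by
  have h (x : V) : finrank ℝ (ℝ ∙ x) ≤ 1 := by simpa using finrank_span_le_card ({x} : Set V)
  exact (finrank_add_le_finrank_add_finrank _ _).trans (add_le_add (h e) (h (T.J e)))

theorem IsTotallyReal.J_mem_orthogonal {T : KahlerModel V} {W : Submodule ℝ V}
    (hW : T.IsTotallyReal W) {w : V} (hw : w ∈ W) : T.J w ∈ Wᗮ := fun u hu ↦ by
  rw [real_inner_comm]
  exact hW w hw u hu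

def IsTotallyRealOrthonormal {ι : Type*} (v : ι → V) : Prop :=
  Orthonormal ℝ v ∧ ∀ i j, ⟪T.J (v i), v j⟫ = 0

variable {T}

theorem IsTotallyRealOrthonormal.isTotallyReal_span {ι : Type*} {v : ι → V}
    (hv : T.IsTotallyRealOrthonormal v) : T.IsTotallyReal (span ℝ (range v)) := by
  have h : span ℝ (range (T.J ∘ v)) ⟂ span ℝ (range v) := by
    rw [isOrtho_span]
    rintro _ ⟨i, rfl⟩ _ ⟨j, rfl⟩
    exact hv.2 i j
  rw [range_comp, ← map_span] at h
  exact fun a ha b hb ↦ h.inner_eq (mem_map_of_mem ha) hb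

theorem IsTotallyRealOrthonormal.cons {n : ℕ} {v : Fin n → V} (hv : T.IsTotallyRealOrthonormal v)
    {x : V} (hx : ‖x‖ = 1) (hxv : ∀ i, ⟪x, v i⟫ = 0 ∧ ⟪T.J x, v i⟫ = 0) :
    T.IsTotallyRealOrthonormal (Fin.cons x v : Fin (n + 1) → V) := by
  have hvx (i : Fin n) : ⟪v i, x⟫ = 0 := by rw [real_inner_comm]; exact (hxv i).1
  have hvJx (i : Fin n) : ⟪v i, T.J x⟫ = 0 := by rw [real_inner_comm]; exact (hxv i).2
  have hxJx : ⟪x, T.J x⟫ = 0 := by rw [real_inner_comm]; exact T.inner_J_self x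
  refine ⟨orthonormal_iff_ite.2 ?_, ?_⟩
  · simp [Fin.forall_fin_succ, orthonormal_iff_ite.1 hv.1, hx, hxv, hvx, Fin.succ_ne_zero,
      (Fin.succ_ne_zero _).symm]
  · simp [Fin.forall_fin_succ, hv.2, hxv, T.inner_J_left _ x, hvJx, hxJx]

theorem sum_inner_R_J_eq_zero {ι : Type*} [Fintype ι] {v : ι → V}
    (hv : T.IsTotallyRealOrthonormal v) (hW : T.IsSpecial (span ℝ (range v)))
    {w w' : V} (hw : w ∈ span ℝ (range v)) (hw' : w' ∈ span ℝ (range v)) :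
    ∑ i, ⟪T.R (v i) w (v i), T.J w'⟫ = 0 :=
  T.sum_inner_R_eq_zero_of_isSpecial hv.1 hW hw (hv.isTotallyReal_span.J_mem_orthogonal hw')

variable (T)

theorem exists_isTotallyRealOrthonormal [FiniteDimensional ℝ V] (n : ℕ) (U : Submodule ℝ V)
    (hU : ∀ x ∈ U, T.J x ∈ U) (hn : 2 * n ≤ finrank ℝ U) :
    ∃ u : Fin n → V, (∀ i, u i ∈ U) ∧ T.IsTotallyRealOrthonormal u := by
  induction n generalizing U with
  | zero =>
    exact ⟨Fin.elim0, fun i ↦ i.elim0, orthonormal_iff_ite.2 fun i ↦ i.elim0, fun i ↦ i.elim0⟩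
  | succ n ih =>
    obtain ⟨x, hxU, hx⟩ := exists_mem_ne_zero_of_ne_bot (p := U) (by rintro rfl; simp at hn)
    set e := ‖x‖⁻¹ • x
    have heU : e ∈ U := U.smul_mem _ hxU
    obtain ⟨u, huU, hu⟩ := ih (U ⊓ (T.complexLine e)ᗮ)
      (fun y hy ↦ ⟨hU y hy.1, T.J_mem_orthogonal (fun _ ↦ T.J_mem_complexLine) hy.2⟩)
      (by linarith [U.finrank_le_finrank_inf_orthogonal_add (T.complexLine e),
        T.finrank_complexLine_le e])
    refine ⟨Fin.cons e u, Fin.cases heU fun i ↦ (huU i).1,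
      hu.cons (norm_smul_inv_norm hx) fun i ↦ ?_⟩
    exact ⟨inner_right_of_mem_orthogonal (T.self_mem_complexLine e) (huU i).2,
      inner_right_of_mem_orthogonal (T.J_mem_complexLine (T.self_mem_complexLine e)) (huU i).2⟩

theorem inner_R_J_eq_zero_of_isSpecial [FiniteDimensional ℝ V] {m k : ℕ}
    (hdim : finrank ℝ V = 2 * m) (hkm : k + 2 ≤ m)
    (hspec : ∀ W : Submodule ℝ V, finrank ℝ W = k + 2 → T.IsTotallyReal W → T.IsSpecial W)
    {X Y : V} (hX : ‖X‖ = 1) (hY : ‖Y‖ = 1) (hXY : Y ∈ (T.complexLine X)ᗮ) :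
    ⟪T.R X Y X, T.J Y⟫ = 0 := by
  obtain ⟨u, huU, hu⟩ := T.exists_isTotallyRealOrthonormal k
    ((T.complexLine X)ᗮ ⊓ (T.complexLine Y)ᗮ)
    (fun x hx ↦ ⟨T.J_mem_orthogonal (fun _ ↦ T.J_mem_complexLine) hx.1,
      T.J_mem_orthogonal (fun _ ↦ T.J_mem_complexLine) hx.2⟩)
    (by linarith [(T.complexLine X)ᗮ.finrank_le_finrank_inf_orthogonal_add (T.complexLine Y),
      (T.complexLine X).finrank_add_finrank_orthogonal, T.finrank_complexLine_le X,
      T.finrank_complexLine_le Y])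
  have hYu := hu.cons hY fun i ↦ (T.mem_orthogonal_complexLine_iff.1 (huU i).2)
  have key (Z : V) (hZ : Z ∈ T.complexLine X) (hZ1 : ‖Z‖ = 1) :
      ⟪T.R Z Y Z, T.J Y⟫ + ∑ i, ⟪T.R (u i) Y (u i), T.J Y⟫ = 0 := by
    have hZ' (y : V) (hy : y ∈ (T.complexLine X)ᗮ) : ⟪Z, y⟫ = 0 ∧ ⟪T.J Z, y⟫ = 0 :=
      ⟨inner_right_of_mem_orthogonal hZ hy,
        inner_right_of_mem_orthogonal (T.J_mem_complexLine hZ) hy⟩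
    have hv := hYu.cons hZ1 (Fin.cases (hZ' Y hXY) fun i ↦ hZ' (u i) (huU i).1)
    have hY : Y ∈ span ℝ (range (Fin.cons Z (Fin.cons Y u) : Fin (k + 2) → V)) :=
      subset_span ⟨1, rfl⟩
    have hW : finrank ℝ (span ℝ (range (Fin.cons Z (Fin.cons Y u) : Fin (k + 2) → V))) = k + 2 := by
      simpa using finrank_span_eq_card hv.1.linearIndependent
    have h := sum_inner_R_J_eq_zero hv (hspec _ hW hv.isTotallyReal_span) hY hY
    simpa [Fin.sum_univ_succ, T.R_self] using h
  linarith [key X (T.self_mem_complexLine X) hX,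
    key (T.J X) (T.J_mem_complexLine (T.self_mem_complexLine X)) (by rw [T.norm_J, hX]),
    T.inner_R_J_J X Y]

theorem inner_R_J_eq_zero_of_norm_eq_one
    (h : ∀ X Y : V, ‖X‖ = 1 → ‖Y‖ = 1 → Y ∈ (T.complexLine X)ᗮ → ⟪T.R X Y X, T.J Y⟫ = 0)
    {X Y : V} (hXY : Y ∈ (T.complexLine X)ᗮ) : ⟪T.R X Y X, T.J Y⟫ = 0 := by
  rcases eq_or_ne X 0 with rfl | hX
  · simp [(T.lin₃ 0 Y).map_zero]
  rcases eq_or_ne Y 0 with rfl | hY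
  · simp
  rw [T.mem_orthogonal_complexLine_iff] at hXY
  have := h (‖X‖⁻¹ • X) (‖Y‖⁻¹ • Y) (norm_smul_inv_norm hX) (norm_smul_inv_norm hY)
    (T.mem_orthogonal_complexLine_iff.2 (by simp [inner_smul_left, inner_smul_right, hXY]))
  simpa [T.R_smul_left, T.R_smul_mid, T.R_smul_right, inner_smul_left, inner_smul_right, hX, hY]
    using this

theorem inner_R_J_eq_of_norm_eq
    (h : ∀ X Y : V, Y ∈ (T.complexLine X)ᗮ → ⟪T.R X Y X, T.J Y⟫ = 0)
    {X Y : V} (hn : ‖X‖ = ‖Y‖) (hXY : Y ∈ (T.complexLine X)ᗮ) :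
    ⟪T.R X Y X, T.J X⟫ = ⟪T.R X Y Y, T.J Y⟫ := by
  have h₀ := h X Y hXY
  obtain ⟨h₁, h₂⟩ := T.mem_orthogonal_complexLine_iff.1 hXY
  have h₃ : ⟪T.R X Y Y, T.J X⟫ = 0 := by
    have := h Y X <| T.mem_orthogonal_complexLine_iff.2
      ⟨by rwa [real_inner_comm], by rw [inner_J_left, real_inner_comm, h₂, neg_zero]⟩
    rwa [T.R_swap X Y, inner_neg_left, neg_eq_zero] at this
  have hsum : ⟪T.R (X + Y) (X - Y) (X + Y), T.J (X - Y)⟫ = 0 := by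
    refine h _ _ <| T.mem_orthogonal_complexLine_iff.2 ⟨?_, ?_⟩
    · rw [inner_add_left, inner_sub_right, inner_sub_right, real_inner_self_eq_norm_sq,
        real_inner_self_eq_norm_sq, real_inner_comm, hn]
      ring
    · rw [map_add, inner_add_left, inner_sub_right, inner_sub_right, inner_J_self, inner_J_self,
        T.inner_J_left Y, real_inner_comm (T.J X) Y, h₂]
      ring
  have hR (z : V) : T.R (X + Y) (X - Y) z = (-2 : ℝ) • T.R X Y z := by
    rw [T.R_add_left, T.R_sub_mid, T.R_sub_mid, T.R_self, T.R_self, T.R_swap X Y]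
    module
  rw [hR, T.R_add_right, map_sub, real_inner_smul_left, inner_add_left, inner_sub_right,
    inner_sub_right, h₀, h₃] at hsum
  linarith

theorem norm_eq_one_and_mem_orthogonal_complexLine {X Y : V}
    (h : Orthonormal ℝ ![X, T.J X, Y, T.J Y]) :
    ‖X‖ = 1 ∧ ‖Y‖ = 1 ∧ Y ∈ (T.complexLine X)ᗮ :=
  ⟨by simpa using h.1 0, by simpa using h.1 2, T.mem_orthogonal_complexLine_iff.2
    ⟨by simpa using h.2 (show (0 : Fin 4) ≠ 2 by decide),
      by simpa using h.2 (show (1 : Fin 4) ≠ 2 by decide)⟩⟩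

theorem xyCond_of_inner_R_J_eq_zero
    (h : ∀ X Y : V, Y ∈ (T.complexLine X)ᗮ → ⟪T.R X Y X, T.J Y⟫ = 0) : T.XYCond := by
  intro X Y hq
  obtain ⟨hX, hY, hXY⟩ := T.norm_eq_one_and_mem_orthogonal_complexLine hq
  have hXJY : T.J Y ∈ (T.complexLine X)ᗮ := T.J_mem_orthogonal (fun _ ↦ T.J_mem_complexLine) hXY
  have hR (z : V) : T.R Y (T.J X) z = T.R X (T.J Y) z := by
    rw [T.R_swap, T.R_J_left, neg_neg]
  calc ⟪T.R X (T.J X) Y, T.J X⟫ = ⟪T.R X (T.J Y) X, T.J X⟫ := by rw [T.pair_symm, hR]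
    _ = ⟪T.R X (T.J Y) (T.J Y), T.J (T.J Y)⟫ :=
      T.inner_R_J_eq_of_norm_eq h (by rw [T.norm_J, hX, hY]) hXJY
    _ = ⟪T.R Y (T.J Y) X, T.J Y⟫ := by
      rw [T.R_J_commute, T.J_isometry, T.pair_symm]

end KahlerModel

theorem xy_of_special_totally_real_subspaces_general {V : Type*} [NormedAddCommGroup V] [InnerProductSpace ℝ V] [FiniteDimensional ℝ V]
    (T : KahlerModel V) (m : ℕ) (hdim : finrank ℝ V = 2 * m)
    (r : ℕ) (hr2 : 2 ≤ r) (hrm : r ≤ m)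
    (hspec : ∀ W : Submodule ℝ V, finrank ℝ W = r → T.IsTotallyReal W →
      T.toCurvatureTensor.IsSpecial W) :
    (∀ X Y : V, Orthonormal ℝ ![X, T.J X, Y, T.J Y] →
        ⟪T.R X Y X, T.J Y⟫ = 0) ∧ T.XYCond := by
  obtain ⟨k, rfl⟩ := Nat.exists_eq_add_of_le' hr2
  have hunit (X Y : V) (hX : ‖X‖ = 1) (hY : ‖Y‖ = 1) (hXY : Y ∈ (T.complexLine X)ᗮ) :
      ⟪T.R X Y X, T.J Y⟫ = 0 :=
    T.inner_R_J_eq_zero_of_isSpecial hdim hrm hspec hX hY hXY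
  refine ⟨fun X Y h ↦ ?_, T.xyCond_of_inner_R_J_eq_zero fun X Y ↦
    T.inner_R_J_eq_zero_of_norm_eq_one hunit⟩
  obtain ⟨hX, hY, hXY⟩ := T.norm_eq_one_and_mem_orthogonal_complexLine h
  exact hunit X Y hX hY hXY

theorem xy_of_special_totally_real_subspaces {V : Type*} [NormedAddCommGroup V] [InnerProductSpace ℝ V] [FiniteDimensional ℝ V]
    (T : KahlerModel V) (m : ℕ) (hm : 2 ≤ m) (hdim : finrank ℝ V = 2 * m)
    (r : ℕ) (hr2 : 2 ≤ r) (hrm : r ≤ m)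
    (hspec : ∀ W : Submodule ℝ V, finrank ℝ W = r → T.IsTotallyReal W →
      T.toCurvatureTensor.IsSpecial W) :
    (∀ X Y : V, Orthonormal ℝ ![X, T.J X, Y, T.J Y] →
        ⟪T.R X Y X, T.J Y⟫ = 0) ∧ T.XYCond :=
  xy_of_special_totally_real_subspaces_general T m hdim r hr2 hrm hspec
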